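/- Let 0 < α < 1, let F be α-SR, and let r > 0 be a monopoly price of F, i.e. φ(r) = 0. Then for every v with 0 ≤ v ≤ r, 1 − F(v) ≤ (1−F(r)) · ( r/((1−α)v + αr) )^{1/(1−α)}. Equivalently, the cumulative hazard rate satisfies H(r) − H(v) ≤ (1/(1−α)) · ln( r/((1−α)v + αr) ). -/

import Mathlib

open MeasureTheory Real Filter

/-- The virtual valuation function `φ(v) = v − (1 − F(v))/f(v)`. -/
noncomputable def virtualValue (F f : ℝ → ℝ) (v : ℝ) : ℝ := v - (1 - F v) / f v

/-- The hazard rate `h(v) = f(v)/(1 − F(v))`. -/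
noncomputable def hazardRate (F f : ℝ → ℝ) (v : ℝ) : ℝ := f v / (1 - F v)

/-- `F` is the CDF of a continuous distribution supported on `[0, ∞)`,
with density `f = F'` that is positive wherever `F < 1`. -/
structure IsCDF (F f : ℝ → ℝ) : Prop where
  zero : F 0 = 0
  mono : Monotone F
  le_one : ∀ v, F v ≤ 1
  tendsto_one : Tendsto F atTop (nhds 1)
  hasDeriv : ∀ v, 0 ≤ v → HasDerivAt F (f v) v
  f_pos : ∀ v, 0 ≤ v → F v < 1 → 0 < f v

/-- `F` is `α`-strongly regular: `φ(y) − φ(x) ≥ α (y − x)` for all `x < y` in the support. -/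
def IsAlphaSR (α : ℝ) (F f : ℝ → ℝ) : Prop :=
  ∀ x y, 0 ≤ x → x < y → F y < 1 →
    virtualValue F f y - virtualValue F f x ≥ α * (y - x)

/-!
Strong regularity below the monopoly price `r` reads `φ(x) ≤ φ(r) - α (r - x) = -α (r - x)`,
i.e. `(1 - F x) / f x = x - φ x ≥ (1 - α) x + α r`. This is exactly the statement that
`x ↦ (1 - F x) · ((1 - α) x + α r) ^ (1 / (1 - α))` has nonnegative derivative on `[0, r]`;
comparing its values at `v` and `r` gives the bound.
-/

variable {F f : ℝ → ℝ} {α r x y : ℝ}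

lemma one_sub_mul_add_mul_pos (hα0 : 0 < α) (hα1 : α < 1) (hr : 0 < r) (hx : 0 ≤ x) :
    0 < (1 - α) * x + α * r := by
  nlinarith [mul_pos hα0 hr]

lemma IsCDF.lt_one_of_virtualValue_eq_zero (hcdf : IsCDF F f) (hr : r ≠ 0)
    (hmon : virtualValue F f r = 0) : F r < 1 := by
  refine (hcdf.le_one r).lt_of_ne fun hFr => hr ?_
  simpa [virtualValue, hFr] using hmon

lemma survival_div_density_eq (x : ℝ) : (1 - F x) / f x = x - virtualValue F f x := by
  unfold virtualValue; ring

lemma IsAlphaSR.virtualValue_le (hSR : IsAlphaSR α F f) (hx : 0 ≤ x) (hxy : x ≤ y)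
    (hy : F y < 1) : virtualValue F f x ≤ virtualValue F f y - α * (y - x) := by
  rcases hxy.lt_or_eq with hlt | rfl
  · linarith [hSR x y hx hlt hy]
  · simp

lemma IsAlphaSR.density_mul_le_survival (hcdf : IsCDF F f) (hSR : IsAlphaSR α F f)
    (hmon : virtualValue F f r = 0) (hFr : F r < 1) (hx : 0 ≤ x) (hxr : x ≤ r) :
    f x * ((1 - α) * x + α * r) ≤ 1 - F x := by
  have hfx : 0 < f x := hcdf.f_pos x hx ((hcdf.mono hxr).trans_lt hFr)
  have hφ := hSR.virtualValue_le hx hxr hFr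
  have hD : (1 - α) * x + α * r ≤ (1 - F x) / f x := by
    rw [survival_div_density_eq]; linarith
  rwa [le_div_iff₀ hfx, mul_comm] at hD

lemma hasDerivAt_survival_mul_rpow {a b : ℝ} (hF : HasDerivAt F (f x) x) (ha : a ≠ 0)
    (hpos : 0 < a * x + b) :
    HasDerivAt (fun y => (1 - F y) * (a * y + b) ^ (1 / a))
      ((1 - F x - f x * (a * x + b)) * (a * x + b) ^ (1 / a - 1)) x := by
  have hD : HasDerivAt (fun y => a * y + b) a x := by
    simpa using ((hasDerivAt_id x).const_mul a).add_const b
  refine ((hF.const_sub 1).mul (hD.rpow_const (p := 1 / a) (Or.inl hpos.ne'))).congr_deriv ?_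
  have hsplit : (a * x + b) ^ (1 / a) = (a * x + b) ^ (1 / a - 1) * (a * x + b) := by
    rw [← rpow_add_one hpos.ne']; norm_num
  rw [hsplit, mul_one_div_cancel ha]
  ring

lemma IsAlphaSR.monotoneOn_survival_mul_rpow (hcdf : IsCDF F f) (hSR : IsAlphaSR α F f)
    (hα0 : 0 < α) (hα1 : α < 1) (hr : 0 < r) (hmon : virtualValue F f r = 0) :
    MonotoneOn (fun x => (1 - F x) * ((1 - α) * x + α * r) ^ (1 / (1 - α)))
      (Set.Icc 0 r) := by
  have hFr : F r < 1 := hcdf.lt_one_of_virtualValue_eq_zero hr.ne' hmon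
  have hDpos : ∀ x, 0 ≤ x → 0 < (1 - α) * x + α * r := fun _ =>
    one_sub_mul_add_mul_pos hα0 hα1 hr
  have hderiv : ∀ x : ℝ, 0 ≤ x → HasDerivAt _ _ x := fun x hx =>
    hasDerivAt_survival_mul_rpow (hcdf.hasDeriv x hx) (sub_ne_zero.2 hα1.ne') (hDpos x hx)
  refine monotoneOn_of_hasDerivWithinAt_nonneg (convex_Icc 0 r) (f' := fun x =>
      (1 - F x - f x * ((1 - α) * x + α * r)) * ((1 - α) * x + α * r) ^ (1 / (1 - α) - 1))
    (fun x hx => (hderiv x hx.1).continuousAt.continuousWithinAt)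
    (fun x hx => ?_) (fun x hx => ?_)
  · rw [interior_Icc] at hx
    exact (hderiv x hx.1.le).hasDerivWithinAt
  · rw [interior_Icc] at hx
    have hkey := hSR.density_mul_le_survival hcdf hmon hFr hx.1.le hx.2.le
    exact mul_nonneg (by linarith) (rpow_nonneg (hDpos x hx.1.le).le _)

theorem survival_upper_bound_below_reserve (α : ℝ) (F f : ℝ → ℝ)
    (hα0 : 0 < α) (hα1 : α < 1)
    (hcdf : IsCDF F f) (hSR : IsAlphaSR α F f)
    (r : ℝ) (hr : 0 < r) (hmon : virtualValue F f r = 0)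
    (v : ℝ) (hv0 : 0 ≤ v) (hvr : v ≤ r) :
    1 - F v ≤ (1 - F r) * ((r / ((1 - α) * v + α * r)) ^ (1 / (1 - α) : ℝ)) := by
  have hDv := one_sub_mul_add_mul_pos hα0 hα1 hr hv0
  have hmono := hSR.monotoneOn_survival_mul_rpow hcdf hα0 hα1 hr hmon
    ⟨hv0, hvr⟩ ⟨hr.le, le_rfl⟩ hvr
  have hDr : (1 - α) * r + α * r = r := by ring
  simp only [hDr] at hmono
  rw [div_rpow hr.le hDv.le, mul_div_assoc', le_div_iff₀ (rpow_pos_of_pos hDv _)]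
  exact hmono
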